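/- Let p be a prime which is a non-zero-divisor in the commutative ring B, let δ be a p-derivation on B with associated Frobenius lift φ, let n ≥ 1, and let t_0, t_1, …, t_n ∈ B satisfy φ^j(t_0) = Σ_{i=0}^{j} p^i · t_i^{p^{j−i}} for every 0 ≤ j ≤ n. Then for every 1 ≤ m ≤ n there exist centered polynomials F, G ∈ ℤ[X_0, …, X_{m−1}] such that t_m − δ^m(t_0) = F(t_0, t_1, …, t_{m−1}) and t_m − δ^m(t_0) = G(t_0, δ(t_0), …, δ^{m−1}(t_0)). -/

import Mathlib

open MvPolynomial

/-- A `p`-derivation on a commutative ring `B`, relative to the polynomial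
`Cp ∈ ℤ[X,Y]` satisfying `p·Cp = X^p + Y^p - (X+Y)^p`. -/
def IsPDeriv (p : ℕ) {B : Type*} [CommRing B] (Cp : MvPolynomial (Fin 2) ℤ)
    (δ : B → B) : Prop :=
  δ 1 = 0 ∧
  (∀ x y : B, δ (x + y) = δ x + δ y + MvPolynomial.aeval ![x, y] Cp) ∧
  (∀ x y : B, δ (x * y) = x ^ p * δ y + y ^ p * δ x + (p : B) * δ x * δ y)

/-- A polynomial is centered if it vanishes when all variables are set to `0`. -/
def Centered {R : Type*} [CommRing R] {σ : Type*} (F : MvPolynomial σ R) : Prop :=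
  MvPolynomial.eval (fun _ => (0 : R)) F = 0

/-! Write `a i = δ^[i] (t 0)` and let `centeredSpan b k` be the set of values of centered integer
polynomials at `b 0, …, b (k-1)`. If `x = F(a)`, then `φ x = F(a₀^p + p·a₁, a₁^p + p·a₂, …)` is
congruent to `F(a)^p` modulo `p` already at the level of integer polynomials in `a 0, …, a k`;
since `p` is a non-zero-divisor, `δ x = (φ x - x^p)/p` is again a centered polynomial, now in one
more variable. Comparing the ghost components `φ (w_i(t)) = w_{i+1}(t)` and dividing by `p^(i+1)`
gives `t (i+1) = δ (t i) + ∑_{j<i} P_{i-j}(t j, δ (t j))`, where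
`p^(k+1) P_k = (X^p + pY)^(p^k) - X^(p^(k+1))`, so `t m - a m ∈ centeredSpan a m` by induction
on `m`. This triangular relation between the `a j` and the `t j` also puts `centeredSpan a m`
inside `centeredSpan t m`. -/

theorem Centered.of_mul {R σ : Type*} [CommRing R] [IsDomain R] {F G : MvPolynomial σ R}
    (hG : eval 0 G ≠ 0) (h : Centered (G * F)) : Centered F := by
  unfold Centered at h ⊢
  rw [map_mul] at h
  exact (mul_eq_zero.mp h).resolve_left hG

section CenteredSpan

variable {B : Type*} [CommRing B]

def centeredSpan (b : ℕ → B) (k : ℕ) : NonUnitalSubring B where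
  carrier :=
    {x | ∃ F : MvPolynomial (Fin k) ℤ, Centered F ∧ aeval (fun i : Fin k => b i) F = x}
  zero_mem' := ⟨0, by simp [Centered], map_zero _⟩
  add_mem' := by
    rintro _ _ ⟨F, hF, rfl⟩ ⟨G, hG, rfl⟩
    exact ⟨F + G, by simp_all [Centered], map_add _ _ _⟩
  neg_mem' := by
    rintro _ ⟨F, hF, rfl⟩
    exact ⟨-F, by simp_all [Centered], map_neg _ _⟩
  mul_mem' := by
    rintro _ _ ⟨F, hF, rfl⟩ ⟨G, hG, rfl⟩
    exact ⟨F * G, by simp_all [Centered], map_mul _ _ _⟩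

theorem apply_mem_centeredSpan (b : ℕ → B) {j k : ℕ} (h : j < k) : b j ∈ centeredSpan b k :=
  ⟨X ⟨j, h⟩, by simp [Centered], aeval_X _ _⟩

theorem aeval_mem_centeredSpan {b : ℕ → B} {k l : ℕ} {F : MvPolynomial (Fin l) ℤ}
    (hF : Centered F) {c : Fin l → B} (hc : ∀ j, c j ∈ centeredSpan b k) :
    aeval c F ∈ centeredSpan b k := by
  choose G hG hGc using hc
  refine ⟨bind₁ G F, ?_, ?_⟩
  · unfold Centered at hF hG ⊢
    rw [eval, eval₂Hom_bind₁]
    exact (congrArg (eval · F) (funext hG)).trans hF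
  · rw [aeval_bind₁]
    simp only [hGc]

theorem centeredSpan_le_centeredSpan {b c : ℕ → B} {k l : ℕ}
    (h : ∀ j < k, b j ∈ centeredSpan c l) : centeredSpan b k ≤ centeredSpan c l := by
  rintro _ ⟨F, hF, rfl⟩
  exact aeval_mem_centeredSpan hF fun j => h j j.isLt

theorem centeredSpan_mono (b : ℕ → B) : Monotone (centeredSpan b) := fun _ _ hkl =>
  centeredSpan_le_centeredSpan fun _ hj => apply_mem_centeredSpan b (hj.trans_le hkl)

theorem mem_centeredSpan_succ_of_sub_mem {b : ℕ → B} {k : ℕ} {x : B}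
    (h : x - b k ∈ centeredSpan b k) : x ∈ centeredSpan b (k + 1) := by
  rw [← add_sub_cancel (b k) x]
  exact add_mem (apply_mem_centeredSpan b k.lt_succ_self) (centeredSpan_mono b k.le_succ h)

theorem centeredSpan_le_of_sub_mem {b c : ℕ → B} {k : ℕ}
    (h : ∀ j < k, c j - b j ∈ centeredSpan b j) : centeredSpan b k ≤ centeredSpan c k := by
  induction k with
  | zero => exact centeredSpan_le_centeredSpan fun j hj => absurd hj j.not_lt_zero
  | succ k ih =>
    refine centeredSpan_le_centeredSpan fun j hj => ?_
    rw [← sub_sub_cancel (c j) (b j)]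
    refine sub_mem (apply_mem_centeredSpan c hj) (centeredSpan_mono c k.le_succ ?_)
    exact ih (fun i hi => h i (hi.trans k.lt_succ_self))
      (centeredSpan_mono b (Nat.le_of_lt_succ hj) (h j hj))

end CenteredSpan

theorem MvPolynomial.map_aeval_int {σ A A' Ψ : Type*} [CommRing A] [CommRing A'] [Algebra ℤ A]
    [Algebra ℤ A'] [FunLike Ψ A A'] [RingHomClass Ψ A A'] (ψ : Ψ) (g : σ → A)
    (F : MvPolynomial σ ℤ) : ψ (aeval g F) = aeval (fun i => ψ (g i)) F := by
  rw [← RingHom.coe_coe ψ, map_aeval, aeval_def, eval₂Hom,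
    RingHom.ext_int ((ψ : A →+* A').comp (algebraMap ℤ A)) (algebraMap ℤ A')]
  rfl

theorem natCast_dvd_aeval_pow_add_mul_sub_pow {p : ℕ} (hp : p.Prime) {σ τ : Type*}
    (F : MvPolynomial σ ℤ) (x y : σ → MvPolynomial τ ℤ) :
    (p : MvPolynomial τ ℤ) ∣ aeval (fun i => x i ^ p + p * y i) F - aeval x F ^ p := by
  have := Fact.mk hp
  rw [← map_natCast C, C_dvd_iff_zmod, map_sub, map_pow, sub_eq_zero, map_aeval_int,
    map_aeval_int, ← frobenius_def, map_aeval_int]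
  simp [frobenius_def]

section Derivation

variable {p : ℕ} {B : Type*} [CommRing B] {δ : B → B}

theorem delta_mem_centeredSpan (hp : p.Prime) (hpB : (p : B) ∈ nonZeroDivisors B)
    (φ : B →+* B) (hφ : ∀ x, φ x = x ^ p + p * δ x) {b : ℕ → B}
    (hb : ∀ i, δ (b i) = b (i + 1)) {k : ℕ} {x : B} (hx : x ∈ centeredSpan b k) :
    δ x ∈ centeredSpan b (k + 1) := by
  obtain ⟨F, hF, rfl⟩ := hx
  obtain ⟨Q, hQ⟩ := natCast_dvd_aeval_pow_add_mul_sub_pow hp F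
    (fun j : Fin k => X j.castSucc) (fun j => X j.succ)
  refine ⟨Q, Centered.of_mul (G := (p : MvPolynomial (Fin (k + 1)) ℤ))
    (by simp [hp.ne_zero]) ?_, ?_⟩
  · rw [Centered, ← hQ, map_sub, map_pow, map_aeval_int, map_aeval_int]
    simp_all [Centered, zero_pow hp.ne_zero]
  · apply (mul_cancel_left_mem_nonZeroDivisors hpB).mp
    have hQb := congrArg (aeval fun i : Fin (k + 1) => b i) hQ
    simp only [map_sub, map_pow, map_mul, map_natCast, map_aeval_int, map_add, aeval_X,
      Fin.val_castSucc, Fin.val_succ, ← hb, ← hφ] at hQb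
    rw [← map_aeval_int, hφ] at hQb
    linear_combination -hQb

theorem delta_sub_mem_centeredSpan (hp : p.Prime) (hpB : (p : B) ∈ nonZeroDivisors B)
    (φ : B →+* B) (hφ : ∀ x, φ x = x ^ p + p * δ x) {Cp : MvPolynomial (Fin 2) ℤ}
    (hCp : Centered Cp) (hδ_add : ∀ x y, δ (x + y) = δ x + δ y + aeval ![x, y] Cp)
    {b : ℕ → B} (hb : ∀ i, δ (b i) = b (i + 1)) {k : ℕ} {x : B}
    (hx : x - b k ∈ centeredSpan b k) : δ x - b (k + 1) ∈ centeredSpan b (k + 1) := by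
  have hx' := centeredSpan_mono b k.le_succ hx
  rw [← add_sub_cancel (b k) x, hδ_add, hb, add_assoc, add_sub_cancel_left]
  refine add_mem (delta_mem_centeredSpan hp hpB φ hφ hb hx) (aeval_mem_centeredSpan hCp ?_)
  exact Fin.forall_fin_two.2 ⟨apply_mem_centeredSpan b k.lt_succ_self, hx'⟩

end Derivation

namespace IsPDeriv

variable {p : ℕ} {B : Type*} [CommRing B] {Cp : MvPolynomial (Fin 2) ℤ} {δ : B → B}

def frobeniusLift (hδ : IsPDeriv p Cp δ)
    (hCp : (p : MvPolynomial (Fin 2) ℤ) * Cp = X 0 ^ p + X 1 ^ p - (X 0 + X 1) ^ p) : B →+* B :=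
  RingHom.mk'
    { toFun x := x ^ p + p * δ x
      map_one' := by simp [hδ.1]
      map_mul' x y := by
        simp only [hδ.2.2]
        ring }
    fun x y => by
      have hCpxy := congrArg (aeval ![x, y]) hCp
      simp only [map_mul, map_natCast, map_add, map_sub, map_pow, aeval_X, Matrix.cons_val_zero,
        Matrix.cons_val_one] at hCpxy
      simp only [MonoidHom.coe_mk, OneHom.coe_mk, hδ.2.1]
      linear_combination hCpxy

theorem frobeniusLift_apply (hδ : IsPDeriv p Cp δ)
    (hCp : (p : MvPolynomial (Fin 2) ℤ) * Cp = X 0 ^ p + X 1 ^ p - (X 0 + X 1) ^ p) (x : B) :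
    hδ.frobeniusLift hCp x = x ^ p + p * δ x :=
  rfl

end IsPDeriv

theorem exists_centered_pow_add_mul_sub_pow {p : ℕ} (hp : p ≠ 0) (k : ℕ) :
    ∃ P : MvPolynomial (Fin 2) ℤ, Centered P ∧
      (X 0 ^ p + (p : MvPolynomial (Fin 2) ℤ) * X 1) ^ p ^ k - (X 0 ^ p) ^ p ^ k =
        (p : MvPolynomial (Fin 2) ℤ) ^ (k + 1) * P := by
  obtain ⟨P, hP⟩ := dvd_sub_pow_of_dvd_sub (p := p)
    (a := X 0 ^ p + (p : MvPolynomial (Fin 2) ℤ) * X 1) (b := X 0 ^ p) ⟨X 1, by ring⟩ k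
  refine ⟨P, Centered.of_mul (G := (p : MvPolynomial (Fin 2) ℤ) ^ (k + 1))
    (by simp [hp]) ?_, hP⟩
  rw [Centered, ← hP]
  simp [hp]

theorem succ_eq_delta_add_sum_of_map_aeval_wittPolynomial {p : ℕ} {B : Type*} [CommRing B]
    {δ : B → B} (hpB : (p : B) ∈ nonZeroDivisors B) (φ : B →+* B)
    (hφ : ∀ x, φ x = x ^ p + p * δ x) {P : ℕ → MvPolynomial (Fin 2) ℤ}
    (hP : ∀ k, (X 0 ^ p + (p : MvPolynomial (Fin 2) ℤ) * X 1) ^ p ^ k - (X 0 ^ p) ^ p ^ k =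
      (p : MvPolynomial (Fin 2) ℤ) ^ (k + 1) * P k)
    (t : ℕ → B) (i : ℕ)
    (hi : φ (aeval t (wittPolynomial p ℤ i)) = aeval t (wittPolynomial p ℤ (i + 1))) :
    t (i + 1) = δ (t i) + ∑ j ∈ Finset.range i, aeval ![t j, δ (t j)] (P (i - j)) := by
  rw [aeval_wittPolynomial, aeval_wittPolynomial, map_sum] at hi
  have hterm : ∀ j ∈ Finset.range i,
      φ (p ^ j * t j ^ p ^ (i - j)) - p ^ j * t j ^ p ^ (i + 1 - j) =
        (p : B) ^ (i + 1) * aeval ![t j, δ (t j)] (P (i - j)) := by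
    intro j hj
    have hPt := congrArg (aeval ![t j, δ (t j)]) (hP (i - j))
    simp only [map_sub, map_pow, map_add, map_mul, map_natCast, aeval_X, Matrix.cons_val_zero,
      Matrix.cons_val_one] at hPt
    have hij : j + (i - j + 1) = i + 1 := by grind
    rw [map_mul, map_pow, map_pow, map_natCast, hφ, ← hij, Nat.add_sub_cancel_left, pow_succ',
      pow_mul, pow_add]
    linear_combination (p : B) ^ j * hPt
  apply (mul_cancel_left_mem_nonZeroDivisors (pow_mem hpB (i + 1))).mp
  calc (p : B) ^ (i + 1) * t (i + 1)
      = ∑ j ∈ Finset.range (i + 1),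
          (φ (p ^ j * t j ^ p ^ (i - j)) - p ^ j * t j ^ p ^ (i + 1 - j)) := by
        rw [Finset.sum_sub_distrib, hi, Finset.sum_range_succ _ (i + 1)]
        simp
    _ = (p : B) ^ (i + 1) *
          (δ (t i) + ∑ j ∈ Finset.range i, aeval ![t j, δ (t j)] (P (i - j))) := by
        rw [Finset.sum_range_succ, Finset.sum_congr rfl hterm, ← Finset.mul_sum, map_mul, map_pow,
          map_natCast, hφ, Nat.sub_self, Nat.add_sub_cancel_left, pow_zero, pow_one, pow_one]
        ring

theorem sub_iterate_mem_centeredSpan {p : ℕ} (hp : p.Prime) {B : Type*} [CommRing B]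
    (hpB : (p : B) ∈ nonZeroDivisors B) {δ : B → B} (φ : B →+* B)
    (hφ : ∀ x, φ x = x ^ p + p * δ x) {Cp : MvPolynomial (Fin 2) ℤ} (hCp : Centered Cp)
    (hδ_add : ∀ x y, δ (x + y) = δ x + δ y + aeval ![x, y] Cp) (t : ℕ → B) (n : ℕ)
    (ht : ∀ j ≤ n, φ^[j] (t 0) = aeval t (wittPolynomial p ℤ j)) :
    ∀ m ≤ n, t m - δ^[m] (t 0) ∈ centeredSpan (fun i => δ^[i] (t 0)) m := by
  set a : ℕ → B := fun i => δ^[i] (t 0)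
  have ha (i : ℕ) : δ (a i) = a (i + 1) := (Function.iterate_succ_apply' δ i (t 0)).symm
  choose P hPc hP using exists_centered_pow_add_mul_sub_pow hp.ne_zero
  intro m
  induction m using Nat.strong_induction_on with
  | _ m ih =>
    intro hmn
    cases m with
    | zero => simp [a]
    | succ i =>
      have hsub (j : ℕ) (hj : j ≤ i) : t j - a j ∈ centeredSpan a j :=
        ih j (by omega) (by omega)
      have hδsub (j : ℕ) (hj : j ≤ i) : δ (t j) - a (j + 1) ∈ centeredSpan a (j + 1) :=
        delta_sub_mem_centeredSpan hp hpB φ hφ hCp hδ_add ha (hsub j hj)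
      rw [succ_eq_delta_add_sum_of_map_aeval_wittPolynomial hpB φ hφ hP t i
        (by rw [← ht i (by omega), ← ht (i + 1) hmn, Function.iterate_succ_apply']),
        add_sub_right_comm]
      refine add_mem (hδsub i le_rfl) (sum_mem fun j hj => aeval_mem_centeredSpan (hPc _) ?_)
      have hj : j < i := Finset.mem_range.mp hj
      exact Fin.forall_fin_two.2
        ⟨centeredSpan_mono a (by omega) (mem_centeredSpan_succ_of_sub_mem (hsub j hj.le)),
          centeredSpan_mono a (by omega) (mem_centeredSpan_succ_of_sub_mem (hδsub j hj.le))⟩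

theorem t_sub_iterate_deriv_centered_general
    (p : ℕ) (hp : p.Prime) {B : Type*} [CommRing B]
    (hpB : (p : B) ∈ nonZeroDivisors B)
    (Cp : MvPolynomial (Fin 2) ℤ)
    (hCp : (p : MvPolynomial (Fin 2) ℤ) * Cp =
      X 0 ^ p + X 1 ^ p - (X 0 + X 1) ^ p)
    (δ : B → B) (hδ : IsPDeriv p Cp δ)
    (φ : B → B) (hφ : ∀ x : B, φ x = x ^ p + (p : B) * δ x)
    (n : ℕ) (t : ℕ → B)
    (ht : ∀ j ≤ n, φ^[j] (t 0) =
      ∑ i ∈ Finset.range (j + 1), (p : B) ^ i * t i ^ p ^ (j - i)) :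
    ∀ m, 1 ≤ m → m ≤ n →
      (∃ F : MvPolynomial (Fin m) ℤ, Centered F ∧
        t m - δ^[m] (t 0) = MvPolynomial.aeval (fun i : Fin m => t i) F) ∧
      (∃ G : MvPolynomial (Fin m) ℤ, Centered G ∧
        t m - δ^[m] (t 0) =
          MvPolynomial.aeval (fun i : Fin m => δ^[(i : ℕ)] (t 0)) G) := by
  intro m _ hmn
  obtain rfl : φ = hδ.frobeniusLift hCp := funext hφ
  have hCp_centered : Centered Cp := Centered.of_mul (G := (p : MvPolynomial (Fin 2) ℤ))
    (by simp [hp.ne_zero]) (by simp [Centered, hCp, zero_pow hp.ne_zero])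
  have hsub := sub_iterate_mem_centeredSpan hp hpB _ (hδ.frobeniusLift_apply hCp) hCp_centered
    hδ.2.1 t n (fun j hj => (ht j hj).trans (aeval_wittPolynomial p ℤ t j).symm)
  obtain ⟨F, hF, hFt⟩ := centeredSpan_le_of_sub_mem (fun j hj => hsub j (by omega)) (hsub m hmn)
  obtain ⟨G, hG, hGt⟩ := hsub m hmn
  exact ⟨⟨F, hF, hFt.symm⟩, ⟨G, hG, hGt.symm⟩⟩

/-- For Witt-coordinate families, `t_m - δ^m(t_0)` is a centered polynomial in
`t_0, …, t_{m-1}`, and also a centered polynomial in `t_0, δ(t_0), …, δ^{m-1}(t_0)`. -/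
theorem t_sub_iterate_deriv_centered
    (p : ℕ) (hp : p.Prime) {B : Type*} [CommRing B]
    (hpB : (p : B) ∈ nonZeroDivisors B)
    (Cp : MvPolynomial (Fin 2) ℤ)
    (hCp : (p : MvPolynomial (Fin 2) ℤ) * Cp =
      X 0 ^ p + X 1 ^ p - (X 0 + X 1) ^ p)
    (δ : B → B) (hδ : IsPDeriv p Cp δ)
    (φ : B → B) (hφ : ∀ x : B, φ x = x ^ p + (p : B) * δ x)
    (n : ℕ) (hn : 1 ≤ n) (t : ℕ → B)
    (ht : ∀ j ≤ n, φ^[j] (t 0) =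
      ∑ i ∈ Finset.range (j + 1), (p : B) ^ i * t i ^ p ^ (j - i)) :
    ∀ m, 1 ≤ m → m ≤ n →
      (∃ F : MvPolynomial (Fin m) ℤ, Centered F ∧
        t m - δ^[m] (t 0) = MvPolynomial.aeval (fun i : Fin m => t i) F) ∧
      (∃ G : MvPolynomial (Fin m) ℤ, Centered G ∧
        t m - δ^[m] (t 0) =
          MvPolynomial.aeval (fun i : Fin m => δ^[(i : ℕ)] (t 0)) G) :=
  t_sub_iterate_deriv_centered_general p hp hpB Cp hCp δ hδ φ hφ n t ht
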